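/- Fix q with 0 < q < 1 and let z ∈ ℂ with |z| < 1. Then the series Σ_{k=0}^∞ q^{k²} z^k / ((q;q)_k (z;q)_k) converges absolutely, and (z;q)_∞ · Σ_{k=0}^∞ q^{k²} z^k / ((q;q)_k (z;q)_k) = Σ_{k=0}^∞ (−1)^k q^{k(k−1)/2} z^k. -/

import Mathlib

/-- The finite q-Pochhammer symbol `(a;q)_k = ∏_{j=0}^{k-1} (1 - a q^j)`. -/
noncomputable def qPoch (a q : ℂ) (k : ℕ) : ℂ := ∏ j ∈ Finset.range k, (1 - a * q ^ j)

/-- The infinite q-Pochhammer symbol `(a;q)_∞ = ∏_{j=0}^{∞} (1 - a q^j)`. -/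
noncomputable def qPochInf (a q : ℂ) : ℂ := ∏' j : ℕ, (1 - a * q ^ j)

/-!
Write `(z;q)_∞ = (z;q)_k (zq^k;q)_∞` and expand `(zq^k;q)_∞` by Euler's identity
`(a;q)_∞ = ∑ₘ (-1)^m q^(m choose 2) a^m / (q;q)_m`. This turns the left side into an absolutely
convergent double sum over `(k, m)`, whose terms with `k + m = n` are `(-1)^n q^(n choose 2) z^n`
times `(-1)^k q^(k+1 choose 2) / ((q;q)_k (q;q)_m)`; these last sum to `1` for every `n`.

That finite identity is read off from formal power series: `E(X) = ∑ₘ (-1)^m q^(m choose 2) X^m /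
(q;q)_m` and `e(X) = ∑ₘ X^m / (q;q)_m` satisfy `E(X) = (1 - X) E(qX)` and `(1 - X) e(X) = e(qX)`,
so `E e` is invariant under `X ↦ qX`, hence `E e = 1` and `E(qX) e(X) = 1 / (1 - X)`.
Euler's identity comes from the same functional equation: `E(a) = (a;q)_n E(aq^n)` and
`E(aq^n) → 1`.
-/

open Finset Filter Topology PowerSeries

lemma Nat.add_one_choose_two (m : ℕ) : (m + 1).choose 2 = m.choose 2 + m := by
  rw [Nat.choose_succ_succ', Nat.choose_one_right, add_comm]

lemma Nat.sq_add_mul_add_choose_two (k m : ℕ) :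
    k ^ 2 + k * m + m.choose 2 = (k + m).choose 2 + (k + k.choose 2) := by
  have h : ((k ^ 2 + k * m + m.choose 2 : ℕ) : ℚ) =
      (((k + m).choose 2 + (k + k.choose 2) : ℕ) : ℚ) := by
    push_cast [Nat.cast_choose_two]
    ring
  exact_mod_cast h

lemma Summable.tsum_prod_eq_tsum_sum_antidiagonal {G A : Type*} [AddCommMonoid G]
    [TopologicalSpace G] [ContinuousAdd G] [T3Space G] [AddCommMonoid A] [HasAntidiagonal A]
    {f : A × A → G} (hf : Summable f) :
    ∑' p, f p = ∑' n, ∑ p ∈ antidiagonal n, f p := by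
  rw [← HasAntidiagonal.sigmaAntidiagonalEquivProd.tsum_eq]
  refine ((HasAntidiagonal.sigmaAntidiagonalEquivProd.summable_iff.2 hf).tsum_sigma'
    fun n => (hasSum_fintype _).summable).trans ?_
  exact tsum_congr fun n => (tsum_fintype _).trans (sum_coe_sort _ _)

lemma summable_pow_choose_two_mul_pow {r : ℝ} (hr0 : 0 ≤ r) (hr1 : r < 1) (s : ℝ) :
    Summable fun m : ℕ => r ^ m.choose 2 * s ^ m := by
  refine summable_of_ratio_norm_eventually_le (r := 1 / 2) (by norm_num) ?_
  have h_small : ∀ᶠ m : ℕ in atTop, r ^ m * |s| ≤ 1 / 2 := by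
    have := (tendsto_pow_atTop_nhds_zero_of_lt_one hr0 hr1).mul_const |s|
    rw [zero_mul] at this
    exact this.eventually (ge_mem_nhds (by norm_num))
  filter_upwards [h_small] with m hm
  have h_ratio :
      r ^ (m + 1).choose 2 * s ^ (m + 1) = (r ^ m * s) * (r ^ m.choose 2 * s ^ m) := by
    rw [Nat.add_one_choose_two]; ring
  rw [h_ratio, norm_mul, Real.norm_eq_abs (_ * s), abs_mul, abs_of_nonneg (pow_nonneg hr0 m)]
  gcongr

lemma PowerSeries.coeff_succ_one_sub_X_mul {R : Type*} [Ring R] (φ : R⟦X⟧) (n : ℕ) :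
    coeff (n + 1) ((1 - X) * φ) = coeff (n + 1) φ - coeff n φ := by
  simp [sub_mul, coeff_succ_X_mul]

lemma qPoch_zero (a q : ℂ) : qPoch a q 0 = 1 := prod_range_zero _

lemma qPoch_succ (a q : ℂ) (k : ℕ) : qPoch a q (k + 1) = qPoch a q k * (1 - a * q ^ k) :=
  prod_range_succ _ _

section QPochhammer

variable {a q : ℂ}

lemma qPoch_self_ne_zero (hq : ∀ n, q ^ (n + 1) ≠ 1) (k : ℕ) : qPoch q q k ≠ 0 :=
  prod_ne_zero_iff.2 fun j _ => sub_ne_zero.2 (by rw [← pow_succ']; exact (hq j).symm)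

lemma norm_mul_pow_le (hq : ‖q‖ ≤ 1) (j : ℕ) : ‖a * q ^ j‖ ≤ ‖a‖ := by
  rw [norm_mul, norm_pow]
  exact mul_le_of_le_one_right (norm_nonneg a) (pow_le_one₀ (norm_nonneg q) hq)

lemma one_sub_norm_le_norm_one_sub_mul_pow (hq : ‖q‖ ≤ 1) (j : ℕ) :
    1 - ‖a‖ ≤ ‖1 - a * q ^ j‖ :=
  calc 1 - ‖a‖ ≤ ‖(1 : ℂ)‖ - ‖a * q ^ j‖ := by
        rw [norm_one]; gcongr; exact norm_mul_pow_le hq j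
    _ ≤ ‖1 - a * q ^ j‖ := norm_sub_norm_le _ _

lemma one_sub_norm_pow_le_norm_qPoch (ha : ‖a‖ ≤ 1) (hq : ‖q‖ ≤ 1) (k : ℕ) :
    (1 - ‖a‖) ^ k ≤ ‖qPoch a q k‖ := by
  rw [qPoch, norm_prod]
  simpa using prod_le_prod (s := range k) (fun _ _ => sub_nonneg.2 ha)
    fun j _ => one_sub_norm_le_norm_one_sub_mul_pow hq j

lemma qPoch_ne_zero (ha : ‖a‖ < 1) (hq : ‖q‖ ≤ 1) (k : ℕ) : qPoch a q k ≠ 0 :=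
  norm_pos_iff.1 <| (pow_pos (sub_pos.2 ha) k).trans_le
    (one_sub_norm_pow_le_norm_qPoch ha.le hq k)

lemma norm_inv_qPoch_le (ha : ‖a‖ < 1) (hq : ‖q‖ ≤ 1) (k : ℕ) :
    ‖(qPoch a q k)⁻¹‖ ≤ (1 - ‖a‖)⁻¹ ^ k := by
  rw [norm_inv, inv_pow]
  exact inv_anti₀ (pow_pos (sub_pos.2 ha) k) (one_sub_norm_pow_le_norm_qPoch ha.le hq k)

end QPochhammer

noncomputable def eulerCoeff (q : ℂ) (m : ℕ) : ℂ := (-1) ^ m * q ^ m.choose 2 / qPoch q q m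

lemma eulerCoeff_zero (q : ℂ) : eulerCoeff q 0 = 1 := by simp [eulerCoeff, qPoch_zero]

noncomputable def qPochInfSeries (q : ℂ) : ℂ⟦X⟧ := mk (eulerCoeff q)

noncomputable def invQPochInfSeries (q : ℂ) : ℂ⟦X⟧ := mk fun m => (qPoch q q m)⁻¹

noncomputable def eulerSum (q a : ℂ) : ℂ := ∑' m, eulerCoeff q m * a ^ m

lemma pow_sq_mul_eulerCoeff_eq (q z : ℂ) (k m : ℕ) :
    q ^ (k ^ 2) * z ^ k / qPoch q q k * (eulerCoeff q m * (z * q ^ k) ^ m) =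
      (-1) ^ (k + m) * q ^ (k + m).choose 2 * z ^ (k + m) *
        (q ^ k * eulerCoeff q k * (qPoch q q m)⁻¹) := by
  have h_sign : (-1 : ℂ) ^ m = (-1) ^ (k + m) * (-1) ^ k := by
    rw [← pow_add, add_right_comm, ← two_mul, pow_add, pow_mul]; norm_num
  have h_exp : q ^ (k ^ 2) * (q ^ k) ^ m * q ^ m.choose 2 =
      q ^ (k + m).choose 2 * (q ^ k * q ^ k.choose 2) := by
    rw [← pow_mul, ← pow_add, ← pow_add, ← pow_add, Nat.sq_add_mul_add_choose_two, pow_add]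
  calc _ = (-1) ^ m * (q ^ (k ^ 2) * (q ^ k) ^ m * q ^ m.choose 2) * (z ^ k * z ^ m) /
        (qPoch q q k * qPoch q q m) := by
          rw [eulerCoeff]; ring
    _ = _ := by
          rw [h_sign, h_exp, ← pow_add, eulerCoeff]; ring

section NotRootOfUnity

variable {q : ℂ} (hq : ∀ n, q ^ (n + 1) ≠ 1)
include hq

lemma eulerCoeff_succ (m : ℕ) :
    eulerCoeff q (m + 1) = q ^ (m + 1) * eulerCoeff q (m + 1) - q ^ m * eulerCoeff q m := by
  have hP := qPoch_self_ne_zero hq m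
  have h1 : 1 - q ^ (m + 1) ≠ 0 := sub_ne_zero.2 (hq m).symm
  rw [eulerCoeff, eulerCoeff, qPoch_succ, Nat.add_one_choose_two, ← pow_succ']
  field_simp
  ring

lemma qPochInfSeries_eq_one_sub_X_mul_rescale :
    qPochInfSeries q = (1 - X) * rescale q (qPochInfSeries q) := by
  ext (_ | n)
  · rw [sub_mul, one_mul, map_sub, coeff_zero_X_mul, sub_zero, coeff_rescale, pow_zero, one_mul]
  · rw [coeff_succ_one_sub_X_mul]
    simpa [qPochInfSeries, coeff_rescale] using eulerCoeff_succ hq n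

lemma one_sub_X_mul_invQPochInfSeries :
    (1 - X) * invQPochInfSeries q = rescale q (invQPochInfSeries q) := by
  ext (_ | n)
  · simp [invQPochInfSeries]
  · have hP := qPoch_self_ne_zero hq n
    have h1 : 1 - q ^ (n + 1) ≠ 0 := sub_ne_zero.2 (hq n).symm
    rw [coeff_succ_one_sub_X_mul]
    simp only [invQPochInfSeries, coeff_mk, coeff_rescale, qPoch_succ, ← pow_succ']
    field_simp
    ring

lemma qPochInfSeries_mul_invQPochInfSeries :
    qPochInfSeries q * invQPochInfSeries q = 1 := by
  have h_fixed : rescale q (qPochInfSeries q * invQPochInfSeries q) =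
      qPochInfSeries q * invQPochInfSeries q := by
    rw [map_mul, ← one_sub_X_mul_invQPochInfSeries hq, ← mul_assoc, mul_comm _ (1 - X),
      ← qPochInfSeries_eq_one_sub_X_mul_rescale hq]
  ext (_ | n)
  · simp [qPochInfSeries, invQPochInfSeries, eulerCoeff_zero, qPoch_zero]
  · have h := congrArg (coeff (n + 1)) h_fixed
    rw [coeff_rescale] at h
    rw [coeff_one, if_neg n.succ_ne_zero]
    exact (mul_left_eq_self₀.1 h).resolve_left (hq n)

lemma rescale_qPochInfSeries_mul_invQPochInfSeries :
    rescale q (qPochInfSeries q) * invQPochInfSeries q = PowerSeries.mk 1 :=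
  calc rescale q (qPochInfSeries q) * invQPochInfSeries q
      = rescale q (qPochInfSeries q) * invQPochInfSeries q * ((1 - X) * PowerSeries.mk 1) := by
        rw [mul_comm (1 - X), mk_one_mul_one_sub_eq_one, mul_one]
    _ = rescale q (qPochInfSeries q * invQPochInfSeries q) * PowerSeries.mk 1 := by
        rw [map_mul, ← one_sub_X_mul_invQPochInfSeries hq]; ring
    _ = PowerSeries.mk 1 := by rw [qPochInfSeries_mul_invQPochInfSeries hq, map_one, one_mul]

lemma sum_antidiagonal_pow_mul_eulerCoeff_mul_inv_qPoch (n : ℕ) :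
    ∑ p ∈ antidiagonal n, q ^ p.1 * eulerCoeff q p.1 * (qPoch q q p.2)⁻¹ = 1 := by
  simpa [coeff_mul, coeff_rescale, qPochInfSeries, invQPochInfSeries] using
    congrArg (coeff n) (rescale_qPochInfSeries_mul_invQPochInfSeries hq)

end NotRootOfUnity

section UnitDisc

variable {q z : ℂ} (hq : ‖q‖ < 1)
include hq

lemma pow_succ_ne_one_of_norm_lt_one (n : ℕ) : q ^ (n + 1) ≠ 1 := fun h => by
  have := pow_lt_one₀ (norm_nonneg q) hq n.succ_ne_zero
  rw [← norm_pow, h, norm_one] at this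
  exact lt_irrefl 1 this

lemma norm_eulerCoeff_le (m : ℕ) : ‖eulerCoeff q m‖ ≤ ‖q‖ ^ m.choose 2 * (1 - ‖q‖)⁻¹ ^ m := by
  rw [eulerCoeff, div_eq_mul_inv, norm_mul, norm_mul, norm_pow, norm_neg, norm_one, one_pow,
    one_mul, norm_pow]
  gcongr
  exact norm_inv_qPoch_le hq hq.le m

lemma summable_norm_eulerCoeff_mul_pow (a : ℂ) :
    Summable fun m => ‖eulerCoeff q m * a ^ m‖ := by
  refine (summable_pow_choose_two_mul_pow (norm_nonneg q) hq ((1 - ‖q‖)⁻¹ * ‖a‖)).of_nonneg_of_le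
    (fun _ => norm_nonneg _) fun m => ?_
  rw [norm_mul, norm_pow, mul_pow, ← mul_assoc]
  gcongr
  exact norm_eulerCoeff_le hq m

lemma multipliable_one_sub_mul_pow (a : ℂ) : Multipliable fun n : ℕ => 1 - a * q ^ n := by
  simpa [sub_eq_add_neg] using multipliable_one_add_of_summable (f := fun n : ℕ => -(a * q ^ n))
    (by simpa [norm_mul] using (summable_geometric_of_lt_one (norm_nonneg q) hq).mul_left ‖a‖)

lemma qPochInf_eq_qPoch_mul_qPochInf (a : ℂ) (k : ℕ) :
    qPochInf a q = qPoch a q k * qPochInf (a * q ^ k) q := by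
  have h_shift : (fun n => 1 - a * q ^ (n + k)) = fun n => 1 - a * q ^ k * q ^ n := by
    ext n; ring
  have hm : Multipliable fun n => 1 - a * q ^ (n + k) := by
    rw [h_shift]; exact multipliable_one_sub_mul_pow hq (a * q ^ k)
  have h := Multipliable.prod_mul_tprod_nat_mul' (f := fun n => 1 - a * q ^ n) hm
  beta_reduce at h
  rw [qPochInf, qPochInf, qPoch, ← h, ← h_shift]

lemma eulerSum_eq_one_sub_mul (a : ℂ) : eulerSum q a = (1 - a) * eulerSum q (q * a) := by
  have hs (b : ℂ) := (summable_norm_eulerCoeff_mul_pow hq b).of_norm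
  have h_tail : eulerSum q (q * a) = 1 + ∑' m, eulerCoeff q (m + 1) * (q * a) ^ (m + 1) := by
    rw [eulerSum, (hs _).tsum_eq_zero_add, eulerCoeff_zero, pow_zero, mul_one]
  calc eulerSum q a = 1 + ∑' m, eulerCoeff q (m + 1) * a ^ (m + 1) := by
        rw [eulerSum, (hs a).tsum_eq_zero_add, eulerCoeff_zero, pow_zero, mul_one]
    _ = 1 + ∑' m, (eulerCoeff q (m + 1) * (q * a) ^ (m + 1) -
          a * (eulerCoeff q m * (q * a) ^ m)) := by
        congr 1
        refine tsum_congr fun m => ?_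
        linear_combination a ^ (m + 1) * eulerCoeff_succ (pow_succ_ne_one_of_norm_lt_one hq) m
    _ = 1 + (∑' m, eulerCoeff q (m + 1) * (q * a) ^ (m + 1) - a * eulerSum q (q * a)) := by
        rw [Summable.tsum_sub ((summable_nat_add_iff 1).2 (hs _)) ((hs _).mul_left a),
          tsum_mul_left, eulerSum]
    _ = (1 - a) * eulerSum q (q * a) := by
        rw [h_tail]
        ring

lemma eulerSum_eq_qPoch_mul (a : ℂ) (n : ℕ) :
    eulerSum q a = qPoch a q n * eulerSum q (a * q ^ n) := by
  induction n with
  | zero => rw [qPoch_zero, pow_zero, mul_one, one_mul]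
  | succ n ih =>
    rw [ih, eulerSum_eq_one_sub_mul hq (a * q ^ n), qPoch_succ, pow_succ]
    ring_nf

lemma tendsto_eulerSum_mul_pow (a : ℂ) :
    Tendsto (fun n : ℕ => eulerSum q (a * q ^ n)) atTop (𝓝 1) := by
  have h_lim : ∀ m : ℕ, Tendsto (fun n : ℕ => eulerCoeff q m * (a * q ^ n) ^ m) atTop
      (𝓝 (eulerCoeff q m * 0 ^ m)) := fun m => by
    simpa only [mul_zero] using
      (((tendsto_pow_atTop_nhds_zero_of_norm_lt_one hq).const_mul a).pow m).const_mul _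
  have h_bound : ∀ n m : ℕ, ‖eulerCoeff q m * (a * q ^ n) ^ m‖ ≤ ‖eulerCoeff q m * a ^ m‖ := by
    intro n m
    rw [norm_mul, norm_mul, norm_pow, norm_pow]
    gcongr
    exact norm_mul_pow_le hq.le n
  have h_at_zero : ∑' m, eulerCoeff q m * 0 ^ m = 1 := by
    rw [tsum_eq_single 0 fun m hm => by simp [hm], eulerCoeff_zero, pow_zero, mul_one]
  rw [← h_at_zero]
  exact tendsto_tsum_of_dominated_convergence (summable_norm_eulerCoeff_mul_pow hq a) h_lim
    (Eventually.of_forall h_bound)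

theorem eulerSum_eq_qPochInf (a : ℂ) : eulerSum q a = qPochInf a q := by
  have h_prod : Tendsto (fun n => qPoch a q n) atTop (𝓝 (qPochInf a q)) :=
    (multipliable_one_sub_mul_pow hq a).hasProd.tendsto_prod_nat
  have h_const : Tendsto (fun n => qPoch a q n * eulerSum q (a * q ^ n)) atTop
      (𝓝 (eulerSum q a)) :=
    tendsto_const_nhds.congr (eulerSum_eq_qPoch_mul hq a)
  simpa using tendsto_nhds_unique h_const (h_prod.mul (tendsto_eulerSum_mul_pow hq a))

lemma summable_norm_pow_sq_mul_pow_div_qPoch_mul_qPoch (hz : ‖z‖ < 1) :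
    Summable fun k : ℕ => ‖q ^ (k ^ 2) * z ^ k / (qPoch q q k * qPoch z q k)‖ := by
  refine (summable_pow_choose_two_mul_pow (norm_nonneg q) hq
    ((1 - ‖q‖)⁻¹ * (1 - ‖z‖)⁻¹ * ‖z‖)).of_nonneg_of_le (fun _ => norm_nonneg _) fun k => ?_
  calc ‖q ^ (k ^ 2) * z ^ k / (qPoch q q k * qPoch z q k)‖
      = ‖q‖ ^ (k ^ 2) * ‖(qPoch q q k)⁻¹‖ * ‖(qPoch z q k)⁻¹‖ * ‖z‖ ^ k := by
        rw [div_eq_mul_inv, mul_inv, norm_mul, norm_mul, norm_mul, norm_pow, norm_pow]; ring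
    _ ≤ ‖q‖ ^ k.choose 2 * (1 - ‖q‖)⁻¹ ^ k * (1 - ‖z‖)⁻¹ ^ k * ‖z‖ ^ k := by
        gcongr ?_ * ?_ * ?_ * _
        exacts [pow_le_pow_of_le_one (norm_nonneg q) hq.le (Nat.choose_le_pow k 2),
          norm_inv_qPoch_le hq hq.le k, norm_inv_qPoch_le hz hq.le k]
    _ = _ := by ring

lemma summable_pow_sq_mul_pow_div_qPoch_mul_eulerCoeff :
    Summable fun p : ℕ × ℕ =>
      q ^ (p.1 ^ 2) * z ^ p.1 / qPoch q q p.1 * (eulerCoeff q p.2 * (z * q ^ p.1) ^ p.2) := by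
  set b : ℕ → ℝ := fun j => ‖q‖ ^ j.choose 2 * ((1 - ‖q‖)⁻¹ * ‖z‖) ^ j
  have hb := summable_pow_choose_two_mul_pow (norm_nonneg q) hq ((1 - ‖q‖)⁻¹ * ‖z‖)
  refine Summable.of_norm_bounded (hb.mul_of_nonneg hb (fun _ => by positivity)
    fun _ => by positivity) fun ⟨k, m⟩ => ?_
  calc ‖q ^ (k ^ 2) * z ^ k / qPoch q q k * (eulerCoeff q m * (z * q ^ k) ^ m)‖
      = ‖q‖ ^ (k ^ 2) * ‖(qPoch q q k)⁻¹‖ * ‖z‖ ^ k * (‖eulerCoeff q m‖ * ‖z * q ^ k‖ ^ m) := by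
        rw [div_eq_mul_inv, norm_mul, norm_mul, norm_mul, norm_mul, norm_pow q, norm_pow z,
          norm_pow (z * q ^ k)]
        ring
    _ ≤ ‖q‖ ^ k.choose 2 * (1 - ‖q‖)⁻¹ ^ k * ‖z‖ ^ k *
        (‖q‖ ^ m.choose 2 * (1 - ‖q‖)⁻¹ ^ m * ‖z‖ ^ m) := by
        gcongr ?_ * ?_ * _ * (?_ * ?_ ^ _)
        exacts [pow_le_pow_of_le_one (norm_nonneg q) hq.le (Nat.choose_le_pow k 2),
          norm_inv_qPoch_le hq hq.le k, norm_eulerCoeff_le hq m,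
          norm_mul_pow_le hq.le k]
    _ = b k * b m := by simp only [b]; ring

theorem qPochInf_mul_tsum_pow_sq_mul_pow_div_qPoch_mul_qPoch (hz : ‖z‖ < 1) :
    qPochInf z q * ∑' k : ℕ, q ^ (k ^ 2) * z ^ k / (qPoch q q k * qPoch z q k) =
      ∑' n : ℕ, (-1) ^ n * q ^ n.choose 2 * z ^ n := by
  have hF := summable_pow_sq_mul_pow_div_qPoch_mul_eulerCoeff (z := z) hq
  calc _ = ∑' k : ℕ, ∑' m : ℕ,
        q ^ (k ^ 2) * z ^ k / qPoch q q k * (eulerCoeff q m * (z * q ^ k) ^ m) := by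
        rw [← tsum_mul_left]
        refine tsum_congr fun k => ?_
        have hZ := qPoch_ne_zero hz hq.le k
        rw [tsum_mul_left, ← eulerSum, eulerSum_eq_qPochInf hq,
          qPochInf_eq_qPoch_mul_qPochInf hq z k]
        field_simp
    _ = ∑' n : ℕ, ∑ p ∈ antidiagonal n,
        q ^ (p.1 ^ 2) * z ^ p.1 / qPoch q q p.1 * (eulerCoeff q p.2 * (z * q ^ p.1) ^ p.2) := by
        rw [← hF.tsum_prod' hF.prod_factor, hF.tsum_prod_eq_tsum_sum_antidiagonal]
    _ = _ := by
        refine tsum_congr fun n => ?_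
        rw [sum_congr rfl fun p hp => by
            rw [pow_sq_mul_eulerCoeff_eq, HasAntidiagonal.mem_antidiagonal.1 hp],
          ← mul_sum,
          sum_antidiagonal_pow_mul_eulerCoeff_mul_inv_qPoch (pow_succ_ne_one_of_norm_lt_one hq),
          mul_one]

end UnitDisc

theorem stmt3 (q : ℝ) (hq0 : 0 < q) (hq1 : q < 1) (z : ℂ) (hz : ‖z‖ < 1) :
    Summable (fun k : ℕ =>
      ‖(q : ℂ) ^ (k ^ 2) * z ^ k / (qPoch (q : ℂ) (q : ℂ) k * qPoch z (q : ℂ) k)‖) ∧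
    qPochInf z (q : ℂ) *
        ∑' k : ℕ, (q : ℂ) ^ (k ^ 2) * z ^ k / (qPoch (q : ℂ) (q : ℂ) k * qPoch z (q : ℂ) k)
      = ∑' k : ℕ, (-1 : ℂ) ^ k * (q : ℂ) ^ (k * (k - 1) / 2) * z ^ k := by
  have hq : ‖(q : ℂ)‖ < 1 := by rwa [Complex.norm_real, Real.norm_of_nonneg hq0.le]
  simp_rw [← Nat.choose_two_right]
  exact ⟨summable_norm_pow_sq_mul_pow_div_qPoch_mul_qPoch hq hz,
    qPochInf_mul_tsum_pow_sq_mul_pow_div_qPoch_mul_qPoch hq hz⟩
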